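/- arXiv:1907.12061 — 6 statements merged into one kernel-verified Lean document; each statement's English description precedes it below -/
import Mathlib

section
/- Let P(x_1,...,x_n) be a multivariate polynomial of total degree at most d over a field F, and assume P is not identically zero. If r_1,...,r_n are picked independently and uniformly at random from a finite subset S of F, then the probability that P(r_1,...,r_n) = 0 is at most d/|S|. -/
open Finset MvPolynomial

theorem sz_aux {F : Type*} [Field F] [DecidableEq F] (S : Finset F) :
    ∀ (n : ℕ) (P : MvPolynomial (Fin n) F), P ≠ 0 →
    ((Fintype.piFinset fun _ : Fin n => S).filter
        (fun r => MvPolynomial.eval r P = 0)).card * S.card ≤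
      P.totalDegree * S.card ^ n := by
  intro n
  induction n with
  | zero =>
    intro P hP
    obtain ⟨c, rfl⟩ := MvPolynomial.C_surjective (Fin 0) P
    have hc : c ≠ 0 := fun h => hP (by simp [h])
    have : ((Fintype.piFinset fun _ : Fin 0 => S).filter
        (fun r => MvPolynomial.eval r (C c) = 0)) = ∅ := by
      apply Finset.filter_false_of_mem
      intro r _
      simpa using hc
    simp only [this, Finset.card_empty, Nat.zero_mul]
    exact Nat.zero_le _
  | succ n ih =>
    intro P hP
    set P' := MvPolynomial.finSuccEquiv F n P with hP'def
    have hP'0 : P' ≠ 0 := by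
      intro h
      exact hP ((MvPolynomial.finSuccEquiv F n).injective (by rw [← hP'def, h, map_zero]))
    set k := P'.natDegree with hk
    set Q := P'.leadingCoeff with hQ
    have hQ0 : Q ≠ 0 := Polynomial.leadingCoeff_ne_zero.mpr hP'0
    have hQd : Q.totalDegree + k ≤ P.totalDegree := by
      have := MvPolynomial.totalDegree_coeff_finSuccEquiv_add_le P k
        (by rwa [← Polynomial.leadingCoeff])
      rwa [← Polynomial.leadingCoeff] at this
    have hkd : k ≤ P.totalDegree := by
      rw [hk, MvPolynomial.natDegree_finSuccEquiv]
      exact MvPolynomial.degreeOf_le_totalDegree P 0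
    set T := Fintype.piFinset fun _ : Fin n => S with hT
    have hTcard : T.card = S.card ^ n := by
      simp [hT]
    -- key: rewrite the count as a sum over tails
    have key : ((Fintype.piFinset fun _ : Fin (n+1) => S).filter
          (fun r => MvPolynomial.eval r P = 0)).card
        = ∑ s ∈ T, (S.filter fun y => MvPolynomial.eval (Fin.cons y s) P = 0).card := by
      have hbij : ((Fintype.piFinset fun _ : Fin (n+1) => S).filter
            (fun r => MvPolynomial.eval r P = 0)).card
          = ((S ×ˢ T).filter (fun p => MvPolynomial.eval (Fin.cons p.1 p.2) P = 0)).card := by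
        apply Finset.card_bij (fun r _ => (r 0, Fin.tail r))
        · intro r hr
          simp only [Finset.mem_filter, Fintype.mem_piFinset, hT] at hr ⊢
          refine ⟨Finset.mem_product.mpr ⟨hr.1 0, ?_⟩, ?_⟩
          · simp only [hT, Fintype.mem_piFinset]
            intro i; exact hr.1 _
          · rw [Fin.cons_self_tail]; exact hr.2
        · intro r hr r' hr' h
          simp only [Prod.mk.injEq] at h
          rw [← Fin.cons_self_tail r, ← Fin.cons_self_tail r', h.1, h.2]
        · intro p hp
          simp only [Finset.mem_filter, Finset.mem_product, hT, Fintype.mem_piFinset] at hp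
          refine ⟨Fin.cons p.1 p.2, ?_, ?_⟩
          · simp only [Finset.mem_filter, Fintype.mem_piFinset]

            constructor
            · intro i
              refine Fin.cases ?_ ?_ i
              · simpa using hp.1.1
              · intro j; simpa using hp.1.2 j
            · exact hp.2
          · simp
      rw [hbij, Finset.card_filter, Finset.sum_product_right]
      congr 1
      ext s
      rw [Finset.card_filter]
    -- bound each summand
    have hbound : ∀ s ∈ T, (S.filter fun y => MvPolynomial.eval (Fin.cons y s) P = 0).card
        ≤ if MvPolynomial.eval s Q = 0 then S.card else k := by
      intro s _
      split_ifs with hs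
      · exact Finset.card_filter_le _ _
      · set q := Polynomial.map (MvPolynomial.eval s) P' with hq
        have hq0 : q ≠ 0 := by
          intro h
          apply hs
          have : q.coeff k = 0 := by rw [h]; simp
          rw [hq, Polynomial.coeff_map] at this
          exact this
        have hsub : (S.filter fun y => MvPolynomial.eval (Fin.cons y s) P = 0)
            ⊆ q.roots.toFinset := by
          intro y hy
          simp only [Finset.mem_filter] at hy
          rw [Multiset.mem_toFinset, Polynomial.mem_roots hq0, Polynomial.IsRoot.def, hq,
            hP'def, ← MvPolynomial.eval_eq_eval_mv_eval']
          exact hy.2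
        calc (S.filter fun y => MvPolynomial.eval (Fin.cons y s) P = 0).card
            ≤ q.roots.toFinset.card := Finset.card_le_card hsub
          _ ≤ Multiset.card q.roots := q.roots.toFinset_card_le
          _ ≤ q.natDegree := Polynomial.card_roots' q
          _ ≤ k := Polynomial.natDegree_map_le
    -- the set of bad tails
    set A := T.filter (fun s => MvPolynomial.eval s Q = 0) with hA
    have hAcard : A.card * S.card ≤ (P.totalDegree - k) * S.card ^ n := by
      calc A.card * S.card ≤ Q.totalDegree * S.card ^ n := ih Q hQ0
        _ ≤ (P.totalDegree - k) * S.card ^ n := by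
            apply Nat.mul_le_mul_right
            omega
    have hsum : ∑ s ∈ T, (S.filter fun y => MvPolynomial.eval (Fin.cons y s) P = 0).card
        ≤ A.card * S.card + S.card ^ n * k := by
      calc ∑ s ∈ T, (S.filter fun y => MvPolynomial.eval (Fin.cons y s) P = 0).card
          ≤ ∑ s ∈ T, (if MvPolynomial.eval s Q = 0 then S.card else k) :=
            Finset.sum_le_sum hbound
        _ = A.card * S.card + (T.filter (fun s => ¬ MvPolynomial.eval s Q = 0)).card * k := by
            rw [Finset.sum_ite, Finset.sum_const, Finset.sum_const, smul_eq_mul, smul_eq_mul]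
        _ ≤ A.card * S.card + S.card ^ n * k := by
            apply Nat.add_le_add_left
            apply Nat.mul_le_mul_right
            rw [← hTcard]
            exact Finset.card_filter_le _ _
    calc ((Fintype.piFinset fun _ : Fin (n+1) => S).filter
          (fun r => MvPolynomial.eval r P = 0)).card * S.card
        ≤ (A.card * S.card + S.card ^ n * k) * S.card := by
          rw [key]; exact Nat.mul_le_mul_right _ hsum
      _ = A.card * S.card * S.card + k * S.card ^ n * S.card := by ring
      _ ≤ (P.totalDegree - k) * S.card ^ n * S.card + k * S.card ^ n * S.card := by
          apply Nat.add_le_add_right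
          exact Nat.mul_le_mul_right _ hAcard
      _ = ((P.totalDegree - k) + k) * (S.card ^ n * S.card) := by ring
      _ = P.totalDegree * S.card ^ (n+1) := by
          rw [Nat.sub_add_cancel hkd, pow_succ]

/-- Schwartz–Zippel: if `P ≠ 0` has total degree at most `d` and each coordinate is
sampled uniformly from a finite nonempty set `S ⊆ F`, then
`Pr[P(r) = 0] ≤ d / |S|`, i.e. `|{r ∈ Sⁿ : P(r) = 0}| ⬝ |S| ≤ d ⬝ |S|ⁿ`. -/
theorem stmt1 {F : Type*} [Field F] [DecidableEq F] {n : ℕ}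
    (P : MvPolynomial (Fin n) F) (hP : P ≠ 0) (d : ℕ) (hd : P.totalDegree ≤ d)
    (S : Finset F) (hS : S.Nonempty) :
    ((Fintype.piFinset fun _ : Fin n => S).filter
        (fun r => MvPolynomial.eval r P = 0)).card * S.card ≤ d * S.card ^ n := by
  calc ((Fintype.piFinset fun _ : Fin n => S).filter
        (fun r => MvPolynomial.eval r P = 0)).card * S.card
      ≤ P.totalDegree * S.card ^ n := sz_aux S n P hP
    _ ≤ d * S.card ^ n := Nat.mul_le_mul_right _ hd
end

section
/- Let P(x_1,...,x_n) be a polynomial over a field of characteristic two and J ⊆ {1,...,n}. For I ⊆ {1,...,n}, let P_{-I} denote the polynomial obtained from P by substituting 0 for x_i for all i ∈ I. Define Q = Σ_{I ⊆ J} P_{-I}. Then for every monomial T divisible by Π_{i ∈ J} x_i, the coefficient of T in Q equals the coefficient of T in P, and for every other monomial T the coefficient of T in Q is zero. -/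
/-!
Zeroing the variables in `I` keeps exactly the monomials of `P` that avoid `I`, so the coefficient
of `T` in `Q` is `P.coeff T` times the number of subsets of `J` avoiding the support of `T`,
namely `2 ^ #{i ∈ J | T i = 0}`. In characteristic two this is `1` when `T` is divisible by
`∏_{i ∈ J} x_i` and `0` otherwise.
-/

open MvPolynomial Finset

theorem Finset.filter_powerset_forall_mem {α : Type*} (J : Finset α) (p : α → Prop)
    [DecidablePred p] :
    {I ∈ J.powerset | ∀ i ∈ I, p i} = (J.filter p).powerset := by
  ext I
  simp only [mem_filter, mem_powerset, subset_iff]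
  aesop

namespace MvPolynomial

variable {R σ : Type*} [CommSemiring R] [DecidableEq σ]

theorem aeval_ite_mem_zero_X_monomial (I : Finset σ) (d : σ →₀ ℕ) (c : R) :
    aeval (fun i => if i ∈ I then 0 else X i) (monomial d c) =
      if ∀ i ∈ I, d i = 0 then monomial d c else 0 := by
  rw [aeval_monomial, algebraMap_eq]
  split_ifs with hd
  · rw [monomial_eq]
    congr 1
    refine Finsupp.prod_congr fun i hi => ?_
    rw [if_neg fun hiI => Finsupp.mem_support_iff.mp hi (hd i hiI)]
  · push Not at hd
    obtain ⟨i, hiI, hdi⟩ := hd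
    rw [Finsupp.prod, Finset.prod_eq_zero (Finsupp.mem_support_iff.mpr hdi)
      (by rw [if_pos hiI, zero_pow hdi]), mul_zero]

theorem coeff_aeval_ite_mem_zero_X (P : MvPolynomial σ R) (I : Finset σ) (T : σ →₀ ℕ) :
    (aeval (fun i => if i ∈ I then 0 else X i) P).coeff T =
      if ∀ i ∈ I, T i = 0 then P.coeff T else 0 := by
  induction P using induction_on' with
  | monomial d c =>
    rw [aeval_ite_mem_zero_X_monomial]
    by_cases hdT : d = T
    · subst hdT
      split_ifs <;> simp
    · split_ifs <;> simp [coeff_monomial, hdT]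
  | add p q hp hq =>
    simp only [map_add, coeff_add, hp, hq]
    split_ifs <;> simp

theorem coeff_sum_powerset_aeval_ite_mem_zero_X (P : MvPolynomial σ R) (J : Finset σ)
    (T : σ →₀ ℕ) :
    (∑ I ∈ J.powerset, aeval (fun i => if i ∈ I then 0 else X i) P).coeff T =
      2 ^ #{i ∈ J | T i = 0} * P.coeff T := by
  simp only [coeff_sum, coeff_aeval_ite_mem_zero_X, sum_ite, sum_const, mul_zero, add_zero,
    nsmul_eq_mul, filter_powerset_forall_mem, card_powerset, Nat.cast_pow, Nat.cast_ofNat]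

end MvPolynomial

/-- Over a field of characteristic two, with `P_{-I}` obtained from `P` by zeroing the
variables indexed by `I`, the polynomial `Q = Σ_{I ⊆ J} P_{-I}` has the same coefficient
as `P` on every monomial divisible by `Π_{i ∈ J} x_i`, and coefficient `0` elsewhere. -/
theorem stmt2 {F : Type*} [Field F] [CharP F 2] {n : ℕ}
    (P : MvPolynomial (Fin n) F) (J : Finset (Fin n))
    (Q : MvPolynomial (Fin n) F)
    (hQ : Q = ∑ I ∈ J.powerset,
        MvPolynomial.aeval (fun i => if i ∈ I then 0 else MvPolynomial.X i) P)
    (T : Fin n →₀ ℕ) :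
    ((∀ i ∈ J, 1 ≤ T i) → Q.coeff T = P.coeff T) ∧
    ((¬ ∀ i ∈ J, 1 ≤ T i) → Q.coeff T = 0) := by
  have hQT : Q.coeff T = 2 ^ #{i ∈ J | T i = 0} * P.coeff T := by
    rw [hQ, coeff_sum_powerset_aeval_ite_mem_zero_X]
  rw [hQT, CharTwo.two_eq_zero]
  constructor
  · intro hT
    rw [filter_false_of_mem fun i hi => Nat.one_le_iff_ne_zero.mp (hT i hi), card_empty,
      pow_zero, one_mul]
  · intro hT
    push Not at hT
    obtain ⟨i, hi, hTi⟩ := hT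
    have hi0 : i ∈ J.filter (T · = 0) := mem_filter.mpr ⟨hi, Nat.lt_one_iff.mp hTi⟩
    rw [zero_pow (card_ne_zero_of_mem hi0), zero_mul]
end

section
/- Let G be a graph in which every vertex v has a list L(v) of allowed colors, let T be the union of all lists, and let H_G be the bipartite graph on (V(G), T) joining v to t iff t ∈ L(v). Suppose T' ⊆ T is an inclusion-wise minimal subset with |N_{H_G}(T')| < |T'|. Then G has a proper list coloring if and only if G - N_{H_G}(T') (with lists restricted to the remaining vertices) has a proper list coloring. -/
/-- Reduction rule for list coloring: if `T'` is an inclusion-wise minimal set of colors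
with `|N_{H_G}(T')| < |T'|` (neighborhoods in the vertex–color incidence graph), then `G`
has a proper list coloring iff `G` minus the vertices `N_{H_G}(T')` has one. -/
theorem stmt7 {V α : Type*} [Fintype V] [DecidableEq V] [DecidableEq α]
    (G : SimpleGraph V) (L : V → Finset α) (T' : Finset α)
    (hT' : T' ⊆ Finset.univ.biUnion L)
    (N : Finset α → Finset V)
    (hN : ∀ S, N S = Finset.univ.filter (fun v => (S ∩ L v).Nonempty))
    (hHall : (N T').card < T'.card)
    (hmin : ∀ S ⊂ T', ¬ ((N S).card < S.card)) :
    (∃ c : V → α, (∀ v, c v ∈ L v) ∧ ∀ u v, G.Adj u v → c u ≠ c v) ↔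
    (∃ c : V → α, (∀ v, v ∉ N T' → c v ∈ L v) ∧
      ∀ u v, u ∉ N T' → v ∉ N T' → G.Adj u v → c u ≠ c v) := by
  constructor
  · rintro ⟨c, h1, h2⟩
    exact ⟨c, fun v _ => h1 v, fun u v _ _ h => h2 u v h⟩
  · rintro ⟨c, h1, h2⟩
    -- build a matching from N T' into T'
    have hall : ∀ s : Finset {v : V // v ∈ N T'},
        s.card ≤ (s.biUnion (fun v => T' ∩ L v.1)).card := by
      intro s
      rcases s.eq_empty_or_nonempty with rfl | ⟨⟨v₀, hv₀⟩, hv₀s⟩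
      · simp
      set W : Finset V := s.image Subtype.val with hW
      set U : Finset α := s.biUnion (fun v => T' ∩ L v.1) with hU
      have hWcard : W.card = s.card := Finset.card_image_of_injective _ Subtype.val_injective
      have hUsub : U ⊆ T' := by
        intro t ht
        rcases Finset.mem_biUnion.mp ht with ⟨v, _, hv⟩
        exact (Finset.mem_inter.mp hv).1
      have hUne : U.Nonempty := by
        have := (hN T') ▸ hv₀
        have hne : (T' ∩ L v₀).Nonempty := (Finset.mem_filter.mp this).2
        rcases hne with ⟨t, ht⟩
        exact ⟨t, Finset.mem_biUnion.mpr ⟨⟨v₀, hv₀⟩, hv₀s, ht⟩⟩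
      set S : Finset α := T' \ U with hS
      have hSsub : S ⊂ T' := by
        refine Finset.sdiff_ssubset ?_ hUne
        exact hUsub
      have hScard : S.card = T'.card - U.card := Finset.card_sdiff_of_subset hUsub
      have hNS : N S ⊆ N T' \ W := by
        intro v hv
        rw [hN S, Finset.mem_filter] at hv
        rcases hv.2 with ⟨t, ht⟩
        rcases Finset.mem_inter.mp ht with ⟨htS, htL⟩
        have htT' : t ∈ T' := (Finset.mem_sdiff.mp htS).1
        have htU : t ∉ U := (Finset.mem_sdiff.mp htS).2
        refine Finset.mem_sdiff.mpr ⟨?_, ?_⟩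
        · rw [hN T', Finset.mem_filter]
          exact ⟨Finset.mem_univ v, ⟨t, Finset.mem_inter.mpr ⟨htT', htL⟩⟩⟩
        · intro hvW
          rcases Finset.mem_image.mp hvW with ⟨⟨v', hv'⟩, hv's, rfl⟩
          exact htU (Finset.mem_biUnion.mpr ⟨⟨v', hv'⟩, hv's,
            Finset.mem_inter.mpr ⟨htT', htL⟩⟩)
      have hWsub : W ⊆ N T' := by
        intro v hv
        rcases Finset.mem_image.mp hv with ⟨⟨v', hv'⟩, _, rfl⟩
        exact hv'
      have hcard1 : (N T' \ W).card = (N T').card - W.card := Finset.card_sdiff_of_subset hWsub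
      have hcard2 : (N S).card ≤ (N T' \ W).card := Finset.card_le_card hNS
      have hmin' := hmin S hSsub
      have hUle : U.card ≤ T'.card := Finset.card_le_card hUsub
      have hWle : W.card ≤ (N T').card := Finset.card_le_card hWsub
      rw [hcard1, hWcard] at hcard2
      rw [hWcard] at hWle
      rw [hScard] at hmin'
      omega
    obtain ⟨f, hfinj, hf⟩ :=
      (Finset.all_card_le_biUnion_card_iff_exists_injective
        (fun v : {v : V // v ∈ N T'} => T' ∩ L v.1)).mp hall
    classical
    refine ⟨fun v => if h : v ∈ N T' then f ⟨v, h⟩ else c v, ?_, ?_⟩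
    · intro v
      by_cases hv : v ∈ N T'
      · simp only [dif_pos hv]
        exact (Finset.mem_inter.mp (hf ⟨v, hv⟩)).2
      · simp only [dif_neg hv]
        exact h1 v hv
    · intro u v hadj
      have hout : ∀ w, w ∉ N T' → c w ∉ T' := by
        intro w hw ht
        apply hw
        rw [hN T', Finset.mem_filter]
        exact ⟨Finset.mem_univ w, ⟨c w, Finset.mem_inter.mpr ⟨ht, h1 w hw⟩⟩⟩
      intro heq
      dsimp only at heq
      by_cases hu : u ∈ N T' <;> by_cases hv : v ∈ N T'
      · rw [dif_pos hu, dif_pos hv] at heq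
        have : (⟨u, hu⟩ : {v : V // v ∈ N T'}) = ⟨v, hv⟩ := hfinj heq
        exact hadj.ne (congrArg Subtype.val this)
      · rw [dif_pos hu, dif_neg hv] at heq
        exact hout v hv (heq ▸ (Finset.mem_inter.mp (hf ⟨u, hu⟩)).1)
      · rw [dif_neg hu, dif_pos hv] at heq
        exact hout u hu (heq ▸ (Finset.mem_inter.mp (hf ⟨v, hv⟩)).1)
      · rw [dif_neg hu, dif_neg hv] at heq
        exact h2 u v hu hv hadj heq
end

section
/- Let U = {1,...,n} be a universe and F = {F_1,...,F_m} a family of subsets of U, and let k ≤ n. Construct the graph G consisting of vertices u_1,...,u_m with lists L(u_i) = F_i, plus a clique on vertices v_1,...,v_{n-k} with lists L(v_j) = U, where every u_i is adjacent to every v_j (and there are no edges among the u_i). Then G admits a proper list coloring if and only if there is a set X ⊆ U with |X| ≤ k such that X ∩ F_i ≠ ∅ for every i ∈ [m]. -/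
/-- Correctness of the reduction from Hitting Set to List Coloring with a clique
modulator: the graph with modulator vertices `u_i` (lists `F i`) completely joined to an
`(n-k)`-clique of vertices with full lists has a proper list coloring iff the family
`F` has a hitting set of size at most `k`. -/
theorem stmt10 (n m k : ℕ) (hk : k ≤ n) (F : Fin m → Finset (Fin n))
    (G : SimpleGraph (Fin m ⊕ Fin (n - k)))
    (hG : ∀ u v, G.Adj u v ↔ u ≠ v ∧ (u.isRight ∨ v.isRight)) :
    (∃ c : Fin m ⊕ Fin (n - k) → Fin n,
        (∀ i, c (Sum.inl i) ∈ F i) ∧ ∀ u v, G.Adj u v → c u ≠ c v) ↔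
    ∃ X : Finset (Fin n), X.card ≤ k ∧ ∀ i, (X ∩ F i).Nonempty := by
  constructor
  · rintro ⟨c, hc, hprop⟩
    set Y : Finset (Fin n) := Finset.image (fun j => c (Sum.inr j)) Finset.univ with hY
    have hinj : Function.Injective (fun j : Fin (n - k) => c (Sum.inr j)) := by
      intro a b hab
      by_contra hne
      exact hprop _ _ ((hG (Sum.inr a) (Sum.inr b)).2 ⟨by simp [hne], by simp⟩) hab
    have hYcard : Y.card = n - k := by
      rw [hY, Finset.card_image_of_injective _ hinj]
      simp
    refine ⟨Yᶜ, ?_, ?_⟩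
    · rw [Finset.card_compl, hYcard]
      simp [Fintype.card_fin]
      omega
    · intro i
      refine ⟨c (Sum.inl i), Finset.mem_inter.2 ⟨?_, hc i⟩⟩
      simp only [Finset.mem_compl, hY, Finset.mem_image]
      rintro ⟨j, -, hj⟩
      exact hprop _ _ ((hG (Sum.inl i) (Sum.inr j)).2 ⟨by simp, by simp⟩) hj.symm
  · rintro ⟨X, hXk, hhit⟩
    have hcard : n - k ≤ Xᶜ.card := by
      rw [Finset.card_compl, Fintype.card_fin]
      omega
    set f := Xᶜ.orderEmbOfCardLe hcard
    choose g hg using hhit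
    refine ⟨Sum.elim g (fun j => f j), fun i => ?_, ?_⟩
    · exact (Finset.mem_inter.1 (hg i)).2
    · intro u v hadj
      obtain ⟨hne, hright⟩ := (hG u v).1 hadj
      have hfX : ∀ j, f j ∈ Xᶜ := fun j => Xᶜ.orderEmbOfCardLe_mem hcard j
      cases u with
      | inl i =>
        cases v with
        | inl i' => simp at hright
        | inr j =>
          intro h
          simp only [Sum.elim_inl, Sum.elim_inr] at h
          exact Finset.mem_compl.1 (hfX j) (h ▸ (Finset.mem_inter.1 (hg i)).1)
      | inr j =>
        cases v with
        | inl i' =>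
          intro h
          simp only [Sum.elim_inl, Sum.elim_inr] at h
          exact Finset.mem_compl.1 (hfX j) (h.symm ▸ (Finset.mem_inter.1 (hg i')).1)
        | inr j' =>
          intro h
          exact hne (by simpa using f.injective (by simpa using h))
end

section
/- Let G be a graph with color set Q, pre-coloring λ_P : X → Q for X ⊆ V(G), clique C = G - D for a clique modulator D; let D' be the non-precolored vertices of D. If v ∈ D' has fewer than |Q| neighbors in G, then G has a proper coloring extending λ_P using only colors from Q if and only if G - v does. -/
/-- Reduction rule for pre-coloring extension with a clique modulator `D`: if a
non-precolored modulator vertex `v` has fewer than `|Q|` neighbors, then `G` has a proper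
coloring extending the pre-coloring using colors of `Q` iff `G - v` does. -/
theorem stmt11 {V α : Type*} [Fintype V] [DecidableEq V] (G : SimpleGraph V)
    [DecidableRel G.Adj] (D X : Finset V) (Q : Finset α) (lamP : V → α)
    (hclique : G.IsClique {u | u ∉ D})
    (hQ : ∀ x ∈ X, lamP x ∈ Q)
    (v : V) (hvD : v ∈ D) (hvX : v ∉ X)
    (hdeg : (G.neighborFinset v).card < Q.card) :
    (∃ c : V → α, (∀ u, c u ∈ Q) ∧ (∀ x ∈ X, c x = lamP x) ∧
        ∀ a b, G.Adj a b → c a ≠ c b) ↔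
    (∃ c : V → α, (∀ u, u ≠ v → c u ∈ Q) ∧ (∀ x ∈ X, x ≠ v → c x = lamP x) ∧
        ∀ a b, a ≠ v → b ≠ v → G.Adj a b → c a ≠ c b) := by
  classical
  constructor
  · rintro ⟨c, h1, h2, h3⟩
    exact ⟨c, fun u _ => h1 u, fun x hx _ => h2 x hx, fun a b _ _ => h3 a b⟩
  · rintro ⟨c, h1, h2, h3⟩
    -- find a fresh color for v
    have himg : (G.neighborFinset v).image c ⊆ Q := by
      intro q hq
      obtain ⟨u, hu, rfl⟩ := Finset.mem_image.mp hq
      exact h1 u (fun h => G.irrefl (h ▸ (G.mem_neighborFinset v u).mp hu))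
    have hcard : ((G.neighborFinset v).image c).card < Q.card :=
      lt_of_le_of_lt (Finset.card_image_le) hdeg
    obtain ⟨q, hqQ, hqn⟩ := Finset.exists_of_ssubset
      (himg.ssubset_of_ne (fun h => absurd hcard (by simp [h])))
    refine ⟨Function.update c v q, ?_, ?_, ?_⟩
    · intro u
      by_cases hu : u = v
      · subst hu; simpa using hqQ
      · simpa [Function.update_of_ne hu] using h1 u hu
    · intro x hx
      have hxv : x ≠ v := fun h => hvX (h ▸ hx)
      simpa [Function.update_of_ne hxv] using h2 x hx hxv
    · intro a b hab
      by_cases ha : a = v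
      · have hb : b ≠ v := fun h => G.irrefl (by rwa [ha, h] at hab)
        rw [ha, Function.update_self, Function.update_of_ne hb]
        intro h
        exact hqn (Finset.mem_image.mpr
          ⟨b, (G.mem_neighborFinset v b).mpr (ha ▸ hab), h.symm⟩)
      · by_cases hb : b = v
        · rw [hb, Function.update_self, Function.update_of_ne ha]
          intro h
          exact hqn (Finset.mem_image.mpr
            ⟨a, (G.mem_neighborFinset v a).mpr (hb ▸ hab).symm, h⟩)
        · simpa [Function.update_of_ne ha, Function.update_of_ne hb] using h3 a b ha hb hab
end

section
/- Let G be a graph with n vertices and color set Q, with a pre-coloring λ_P : X → Q. Suppose that after adding the following edges the resulting graph G' satisfies: (R1) any two non-precolored vertices u, v with λ_P(N(u)) ∪ λ_P(N(v)) = Q are adjacent; (R2) any non-precolored u adjacent to a precolored v is adjacent to all vertices with precolor λ_P(v); (R3) any two precolored vertices with different precolors are adjacent. If the complement of G' contains a matching M with |M| ≥ n − |Q|, then λ_P extends to a proper coloring of G using only colors from Q. -/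
open SimpleGraph Finset

section Stmt17Aux

variable {V : Type*} [Fintype V] [DecidableEq V]

private noncomputable def s17idx (v : V) : ℕ := (Fintype.equivFin V v : ℕ)

private lemma s17idx_inj {a b : V} (h : s17idx a = s17idx b) : a = b :=
  (Fintype.equivFin V).injective (Fin.val_injective h)

variable {H : SimpleGraph V} (M : H.Subgraph) (hM : M.IsMatching)

open Classical in
private noncomputable def s17pf (v : V) : V :=
  if h : v ∈ M.verts then (hM h).choose else v

private lemma s17pf_adj {v : V} (h : v ∈ M.verts) : M.Adj v (s17pf M hM v) := by
  rw [s17pf, dif_pos h]; exact (hM h).choose_spec.1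

private lemma s17pf_eq {v w : V} (h : M.Adj v w) : w = s17pf M hM v := by
  have hv : v ∈ M.verts := M.edge_vert h
  rw [s17pf, dif_pos hv]; exact (hM hv).choose_spec.2 w h

private lemma s17pf_mem {v : V} (h : v ∈ M.verts) : s17pf M hM v ∈ M.verts :=
  M.edge_vert (s17pf_adj M hM h).symm

private lemma s17pf_invol {v : V} (h : v ∈ M.verts) : s17pf M hM (s17pf M hM v) = v :=
  (s17pf_eq M hM (s17pf_adj M hM h).symm).symm

private lemma s17pf_ne {v : V} (h : v ∈ M.verts) : s17pf M hM v ≠ v :=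
  Ne.symm (s17pf_adj M hM h).ne

open Classical in
private noncomputable def s17rho (v : V) : V :=
  if h : v ∈ M.verts then
    (if s17idx v ≤ s17idx (s17pf M hM v) then v else s17pf M hM v)
  else v

private lemma s17rho_cases (v : V) :
    s17rho M hM v = v ∨ (v ∈ M.verts ∧ s17rho M hM v = s17pf M hM v) := by
  rw [s17rho]
  split_ifs with h1 h2
  · left; rfl
  · right; exact ⟨h1, rfl⟩
  · left; rfl

private lemma s17rho_fix (v : V) : s17rho M hM (s17rho M hM v) = s17rho M hM v := by
  by_cases h : v ∈ M.verts
  · by_cases h2 : s17idx v ≤ s17idx (s17pf M hM v)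
    · have hv : s17rho M hM v = v := by rw [s17rho, dif_pos h, if_pos h2]
      rw [hv, hv]
    · have hv : s17rho M hM v = s17pf M hM v := by rw [s17rho, dif_pos h, if_neg h2]
      rw [hv, s17rho, dif_pos (s17pf_mem M hM h), s17pf_invol M hM h,
        if_pos (le_of_not_ge h2)]
  · have hv : s17rho M hM v = v := by rw [s17rho, dif_neg h]
    rw [hv, hv]

private lemma s17rho_eq {a b : V} (h : s17rho M hM a = s17rho M hM b) :
    a = b ∨ (a ∈ M.verts ∧ b = s17pf M hM a) := by
  rcases s17rho_cases M hM a with ha | ⟨hav, ha⟩ <;>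
    rcases s17rho_cases M hM b with hb | ⟨hbv, hb⟩
  · left; rw [← ha, ← hb, h]
  · right
    have hab : a = s17pf M hM b := by rw [← hb, ← h, ha]
    constructor
    · rw [hab]; exact s17pf_mem M hM hbv
    · rw [hab, s17pf_invol M hM hbv]
  · right; exact ⟨hav, by rw [← ha, h, hb]⟩
  · left
    have h2 : s17pf M hM a = s17pf M hM b := by rw [← ha, ← hb, h]
    rw [← s17pf_invol M hM hav, h2, s17pf_invol M hM hbv]

open Classical in
private noncomputable def s17mate (X : Finset V) (v : V) : V :=
  if v ∈ M.verts ∧ s17pf M hM v ∉ X then s17pf M hM v else v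

private lemma s17mate_notX (X : Finset V) {v : V} (hv : v ∉ X) : s17mate M hM X v ∉ X := by
  classical
  simp only [s17mate]
  split_ifs with h
  · exact h.2
  · exact hv

private lemma s17mate_invol (X : Finset V) {v : V} (hv : v ∉ X) :
    s17mate M hM X (s17mate M hM X v) = v := by
  classical
  by_cases h : v ∈ M.verts ∧ s17pf M hM v ∉ X
  · have h1 : s17mate M hM X v = s17pf M hM v := by simp only [s17mate]; rw [if_pos h]
    rw [h1]
    have h2 : s17pf M hM v ∈ M.verts ∧ s17pf M hM (s17pf M hM v) ∉ X := by
      refine ⟨s17pf_mem M hM h.1, ?_⟩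
      rw [s17pf_invol M hM h.1]; exact hv
    simp only [s17mate]; rw [if_pos h2, s17pf_invol M hM h.1]
  · have h1 : s17mate M hM X v = v := by simp only [s17mate]; rw [if_neg h]
    rw [h1, h1]

private lemma s17mate_adj (X : Finset V) {v : V} (h : s17mate M hM X v ≠ v) :
    M.Adj v (s17mate M hM X v) := by
  classical
  by_cases hc : v ∈ M.verts ∧ s17pf M hM v ∉ X
  · have h1 : s17mate M hM X v = s17pf M hM v := by simp only [s17mate]; rw [if_pos hc]
    rw [h1]; exact s17pf_adj M hM hc.1
  · exact absurd (by simp only [s17mate]; rw [if_neg hc]) h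

private noncomputable def s17rep (X : Finset V) (v : V) : V :=
  if s17idx v ≤ s17idx (s17mate M hM X v) then v else s17mate M hM X v

private lemma s17rep_or (X : Finset V) (v : V) :
    s17rep M hM X v = v ∨ s17rep M hM X v = s17mate M hM X v := by
  rw [s17rep]; split_ifs
  · exact Or.inl rfl
  · exact Or.inr rfl

private lemma s17rep_notX (X : Finset V) {v : V} (hv : v ∉ X) : s17rep M hM X v ∉ X := by
  rcases s17rep_or M hM X v with h | h <;> rw [h]
  · exact hv
  · exact s17mate_notX M hM X hv

private lemma s17rep_fix (X : Finset V) {v : V} (hv : v ∉ X) :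
    s17rep M hM X (s17rep M hM X v) = s17rep M hM X v := by
  by_cases h : s17idx v ≤ s17idx (s17mate M hM X v)
  · have h1 : s17rep M hM X v = v := by rw [s17rep, if_pos h]
    rw [h1, h1]
  · have h1 : s17rep M hM X v = s17mate M hM X v := by rw [s17rep, if_neg h]
    rw [h1, s17rep, s17mate_invol M hM X hv, if_pos (le_of_not_ge h)]

private lemma s17rep_eq (X : Finset V) {u v : V} (hu : u ∉ X) (hv : v ∉ X)
    (h : s17rep M hM X u = s17rep M hM X v) : u = v ∨ v = s17mate M hM X u := by
  rcases s17rep_or M hM X u with h1 | h1 <;> rcases s17rep_or M hM X v with h2 | h2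
  · left; rw [← h1, ← h2, h]
  · right
    have h3 : u = s17mate M hM X v := by rw [← h2, ← h, h1]
    rw [h3, s17mate_invol M hM X hv]
  · right; rw [← h1, h, h2]
  · left
    have h3 : s17mate M hM X u = s17mate M hM X v := by rw [← h1, ← h2, h]
    have h4 := congrArg (s17mate M hM X) h3
    rwa [s17mate_invol M hM X hu, s17mate_invol M hM X hv] at h4

open Classical in
private noncomputable def s17L {α : Type*} [DecidableEq α] (G' : SimpleGraph V)
    (Q : Finset α) (X : Finset V) (lamP : V → α) (v : V) : Finset α :=
  Q.filter fun q =>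
    ∀ w ∈ X, (G'.Adj v w ∨ G'.Adj (s17mate M hM X v) w) → lamP w ≠ q

end Stmt17Aux

/-- If `G'` is obtained from `G` by adding edges and satisfies the closure rules
(R1)–(R3) for the pre-coloring `λ_P : X → Q`, and the complement of `G'` has a matching
`M` with `|M| ≥ n - |Q|`, then `λ_P` extends to a proper coloring of `G` using only
colors from `Q`. -/
theorem stmt17 {V α : Type*} [Fintype V] [DecidableEq V] [DecidableEq α]
    (G G' : SimpleGraph V) (hGG' : G ≤ G')
    (Q : Finset α) (X : Finset V) (lamP : V → α)
    (hQ : ∀ x ∈ X, lamP x ∈ Q)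
    (hproper : ∀ x ∈ X, ∀ y ∈ X, G.Adj x y → lamP x ≠ lamP y)
    (hR1 : ∀ u v, u ∉ X → v ∉ X → u ≠ v →
      (∀ q ∈ Q, ∃ w ∈ X, (G'.Adj u w ∨ G'.Adj v w) ∧ lamP w = q) → G'.Adj u v)
    (hR2 : ∀ u v, u ∉ X → v ∈ X → G'.Adj u v →
      ∀ w ∈ X, lamP w = lamP v → u ≠ w → G'.Adj u w)
    (hR3 : ∀ u v, u ∈ X → v ∈ X → lamP u ≠ lamP v → G'.Adj u v)
    (M : (G'ᶜ).Subgraph) (hM : M.IsMatching)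
    (hMcard : Fintype.card V - Q.card ≤ M.edgeSet.ncard) :
    ∃ c : V → α, (∀ v, c v ∈ Q) ∧ (∀ x ∈ X, c x = lamP x) ∧
      ∀ u v, G.Adj u v → c u ≠ c v := by
  classical
  -- Hall condition for the color lists of the (merged) non-precolored vertices
  have hall : ∀ S : Finset V, (∀ v ∈ S, v ∉ X ∧ s17rep M hM X v = v) →
      S.card ≤ (S.biUnion (s17L M hM G' Q X lamP)).card := by
    intro S hS
    rcases S.eq_empty_or_nonempty with rfl | ⟨u₀, hu₀⟩
    · simp
    set T := S.biUnion (s17L M hM G' Q X lamP) with hTdef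
    have hTQ : T ⊆ Q := by
      intro q hq
      rcases Finset.mem_biUnion.1 hq with ⟨v, _, hv⟩
      exact (Finset.mem_filter.1 hv).1
    have hLT : ∀ v ∈ S, s17L M hM G' Q X lamP v ⊆ T :=
      fun v hv q hq => Finset.mem_biUnion.2 ⟨v, hv, hq⟩
    -- for each color outside T there is a precolored vertex with that color
    have hex : ∀ r ∈ Q \ T, ∃ x, x ∈ X ∧ lamP x = r := by
      intro r hr
      have hrQT := Finset.mem_sdiff.1 hr
      have hnot : r ∉ s17L M hM G' Q X lamP u₀ := fun h => hrQT.2 (hLT u₀ hu₀ h)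
      rw [s17L, Finset.mem_filter] at hnot
      push_neg at hnot
      obtain ⟨w, hwX, _, hlam⟩ := hnot hrQT.1
      exact ⟨w, hwX, hlam⟩
    have hχ' : ∃ χ : α → V, ∀ r ∈ Q \ T, χ r ∈ X ∧ lamP (χ r) = r := by
      choose χ h1 h2 using hex
      refine ⟨fun r => if h' : r ∈ Q \ T then χ r h' else u₀, ?_⟩
      intro r hr
      simp only [dif_pos hr]
      exact ⟨h1 r hr, h2 r hr⟩
    obtain ⟨χ, hχ⟩ := hχ'
    -- counting classes
    have hCN : (univ.filter fun v : V => s17rho M hM v = v).card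
        + (univ.filter fun v : V => ¬ s17rho M hM v = v).card = Fintype.card V := by
      rw [Finset.card_filter_add_card_filter_not, Finset.card_univ]
    have hedge : M.edgeSet.ncard ≤ (univ.filter fun v : V => ¬ s17rho M hM v = v).card := by
      have hsub : M.edgeSet ⊆ (fun v => s(v, s17pf M hM v)) ''
          (↑(univ.filter fun v : V => ¬ s17rho M hM v = v) : Set V) := by
        intro e
        induction e using Sym2.ind with
        | _ a b =>
          intro he
          rw [SimpleGraph.Subgraph.mem_edgeSet] at he
          have hb : b = s17pf M hM a := s17pf_eq M hM he
          have ha' : a = s17pf M hM b := s17pf_eq M hM he.symm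
          have hav : a ∈ M.verts := M.edge_vert he
          have hbv : b ∈ M.verts := M.edge_vert he.symm
          have hab : a ≠ b := he.ne
          by_cases hle : s17idx a ≤ s17idx b
          · refine ⟨b, ?_, ?_⟩
            · rw [Finset.mem_coe, Finset.mem_filter]
              refine ⟨Finset.mem_univ _, ?_⟩
              have hlt : ¬ s17idx b ≤ s17idx (s17pf M hM b) := by
                rw [← ha']
                intro hba
                exact hab (s17idx_inj (le_antisymm hle hba))
              rw [s17rho, dif_pos hbv, if_neg hlt, ← ha']
              exact hab
            · show s(b, s17pf M hM b) = s(a, b)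
              rw [← ha', Sym2.eq_swap]
          · refine ⟨a, ?_, ?_⟩
            · rw [Finset.mem_coe, Finset.mem_filter]
              refine ⟨Finset.mem_univ _, ?_⟩
              rw [s17rho, dif_pos hav, if_neg (by rw [← hb]; exact hle), ← hb]
              exact fun h => hab h.symm
            · show s(a, s17pf M hM a) = s(a, b)
              rw [← hb]
      calc M.edgeSet.ncard
          ≤ ((fun v => s(v, s17pf M hM v)) ''
            (↑(univ.filter fun v : V => ¬ s17rho M hM v = v) : Set V)).ncard :=
            Set.ncard_le_ncard hsub (Set.toFinite _)
        _ ≤ (↑(univ.filter fun v : V => ¬ s17rho M hM v = v) : Set V).ncard :=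
            Set.ncard_image_le (Set.toFinite _)
        _ = (univ.filter fun v : V => ¬ s17rho M hM v = v).card := Set.ncard_coe_finset _
    have hCle : (univ.filter fun v : V => s17rho M hM v = v).card ≤ Q.card := by omega
    -- the two injective families of classes
    have hS1C : S.image (s17rho M hM) ⊆ univ.filter fun v : V => s17rho M hM v = v := by
      intro y hy
      obtain ⟨v, _, rfl⟩ := Finset.mem_image.1 hy
      exact Finset.mem_filter.2 ⟨Finset.mem_univ _, s17rho_fix M hM v⟩
    have hS2C : ((Q \ T).image fun r => s17rho M hM (χ r)) ⊆
        univ.filter fun v : V => s17rho M hM v = v := by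
      intro y hy
      obtain ⟨r, _, rfl⟩ := Finset.mem_image.1 hy
      exact Finset.mem_filter.2 ⟨Finset.mem_univ _, s17rho_fix M hM _⟩
    have hS1card : (S.image (s17rho M hM)).card = S.card := by
      apply Finset.card_image_of_injOn
      intro u hu u' hu' h
      rcases s17rho_eq M hM h with h1 | ⟨hmem, h2⟩
      · exact h1
      · exfalso
        have hu0 := hS u hu
        have hu0' := hS u' hu'
        have hmu : s17mate M hM X u = u' := by
          simp only [s17mate]
          rw [if_pos ⟨hmem, by rw [← h2]; exact hu0'.1⟩]
          exact h2.symm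
        have hne : u' ≠ u := by rw [h2]; exact s17pf_ne M hM hmem
        have h3 : s17idx u ≤ s17idx u' := by
          by_contra hlt
          have hr := hu0.2
          rw [s17rep, hmu, if_neg hlt] at hr
          exact hne hr
        have hmu' : s17mate M hM X u' = u := by
          rw [← hmu]; exact s17mate_invol M hM X hu0.1
        have h4 : s17idx u' ≤ s17idx u := by
          by_contra hlt
          have hr := hu0'.2
          rw [s17rep, hmu', if_neg hlt] at hr
          exact hne.symm hr
        exact hne (s17idx_inj (le_antisymm h4 h3))
    have hS2card : ((Q \ T).image fun r => s17rho M hM (χ r)).card = (Q \ T).card := by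
      apply Finset.card_image_of_injOn
      intro r hr r' hr' h
      rcases s17rho_eq M hM h with h1 | ⟨hmem, h2⟩
      · rw [← (hχ r hr).2, ← (hχ r' hr').2, h1]
      · by_contra hne
        have hadj' : G'.Adj (χ r) (χ r') :=
          hR3 _ _ (hχ r hr).1 (hχ r' hr').1
            (by rw [(hχ r hr).2, (hχ r' hr').2]; exact hne)
        have hMadj : M.Adj (χ r) (χ r') := by rw [h2]; exact s17pf_adj M hM hmem
        exact ((SimpleGraph.compl_adj G' _ _).1 (M.adj_sub hMadj)).2 hadj'
    have hdisj : Disjoint (S.image (s17rho M hM))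
        ((Q \ T).image fun r => s17rho M hM (χ r)) := by
      rw [Finset.disjoint_left]
      intro y hy1 hy2
      obtain ⟨u, hu, rfl⟩ := Finset.mem_image.1 hy1
      obtain ⟨r, hr, heq⟩ := Finset.mem_image.1 hy2
      have hu0 := hS u hu
      rcases s17rho_eq M hM heq.symm with h1 | ⟨hmem, h2⟩
      · exact hu0.1 (h1 ▸ (hχ r hr).1)
      · have hMadj : M.Adj u (χ r) := by rw [h2]; exact s17pf_adj M hM hmem
        have hcompl := (SimpleGraph.compl_adj G' _ _).1 (M.adj_sub hMadj)
        have hmu : s17mate M hM X u = u := by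
          simp only [s17mate]
          rw [if_neg (fun hc => hc.2 (h2 ▸ (hχ r hr).1))]
        have hrQ := (Finset.mem_sdiff.1 hr).1
        have hrL : r ∈ s17L M hM G' Q X lamP u := by
          rw [s17L, Finset.mem_filter]
          refine ⟨hrQ, ?_⟩
          intro w hw hor hlam
          have hadj : G'.Adj u w := by
            rcases hor with h | h
            · exact h
            · rwa [hmu] at h
          have hadj2 := hR2 u w hu0.1 hw hadj (χ r) (hχ r hr).1
            (by rw [(hχ r hr).2, hlam]) (fun he => hu0.1 (he ▸ (hχ r hr).1))
          exact hcompl.2 hadj2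
        exact (Finset.mem_sdiff.1 hr).2 (hLT u hu hrL)
    have hfinal : (S.image (s17rho M hM)).card
        + ((Q \ T).image fun r => s17rho M hM (χ r)).card ≤ Q.card := by
      rw [← Finset.card_union_of_disjoint hdisj]
      exact (Finset.card_le_card (Finset.union_subset hS1C hS2C)).trans hCle
    rw [hS1card, hS2card] at hfinal
    have hc1 : (Q \ T).card = Q.card - T.card := Finset.card_sdiff_of_subset hTQ
    have hc2 : T.card ≤ Q.card := Finset.card_le_card hTQ
    omega
  -- apply Hall's marriage theorem
  have hallSub : ∀ s : Finset {v : V // v ∉ X ∧ s17rep M hM X v = v},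
      s.card ≤ (s.biUnion fun v => s17L M hM G' Q X lamP v.val).card := by
    intro s
    have h2 : (s.biUnion fun v => s17L M hM G' Q X lamP v.val)
        = (s.image Subtype.val).biUnion (s17L M hM G' Q X lamP) := by
      ext q
      simp only [Finset.mem_biUnion, Finset.mem_image]
      constructor
      · rintro ⟨v, hv, hq⟩; exact ⟨v.val, ⟨v, hv, rfl⟩, hq⟩
      · rintro ⟨w, ⟨v, hv, rfl⟩, hq⟩; exact ⟨v, hv, hq⟩
    rw [h2, ← Finset.card_image_of_injective s Subtype.val_injective]
    refine hall _ ?_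
    intro w hw
    obtain ⟨v, hv, rfl⟩ := Finset.mem_image.1 hw
    exact v.2
  obtain ⟨f, hfinj, hfmem⟩ :=
    (Finset.all_card_le_biUnion_card_iff_exists_injective
      (fun v : {v : V // v ∉ X ∧ s17rep M hM X v = v} =>
        s17L M hM G' Q X lamP v.val)).1 hallSub
  -- assemble the coloring
  refine ⟨fun v => if h : v ∈ X then lamP v
    else f ⟨s17rep M hM X v, s17rep_notX M hM X h, s17rep_fix M hM X h⟩, ?_, ?_, ?_⟩
  · intro v
    dsimp only
    by_cases h : v ∈ X
    · rw [dif_pos h]; exact hQ v h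
    · rw [dif_neg h]
      have hx := hfmem ⟨s17rep M hM X v, s17rep_notX M hM X h, s17rep_fix M hM X h⟩
      rw [s17L, Finset.mem_filter] at hx
      exact hx.1
  · intro x hx
    dsimp only
    rw [dif_pos hx]
  · intro u v huv
    dsimp only
    have key : ∀ a b : V, G.Adj a b → ∀ (ha : a ∉ X), b ∈ X →
        f ⟨s17rep M hM X a, s17rep_notX M hM X ha, s17rep_fix M hM X ha⟩ ≠ lamP b := by
      intro a b hab ha hb
      have hx := hfmem ⟨s17rep M hM X a, s17rep_notX M hM X ha, s17rep_fix M hM X ha⟩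
      rw [s17L, Finset.mem_filter] at hx
      intro hcontra
      refine hx.2 b hb ?_ hcontra.symm
      rcases s17rep_or M hM X a with h1 | h1
      · left
        show G'.Adj (s17rep M hM X a) b
        rw [h1]; exact hGG' hab
      · right
        show G'.Adj (s17mate M hM X (s17rep M hM X a)) b
        rw [h1, s17mate_invol M hM X ha]; exact hGG' hab
    by_cases hu : u ∈ X <;> by_cases hv : v ∈ X
    · rw [dif_pos hu, dif_pos hv]; exact hproper u hu v hv huv
    · rw [dif_pos hu, dif_neg hv]
      exact (key v u huv.symm hv hu).symm
    · rw [dif_neg hu, dif_pos hv]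
      exact key u v huv hu hv
    · rw [dif_neg hu, dif_neg hv]
      by_cases hr : s17rep M hM X u = s17rep M hM X v
      · exfalso
        rcases s17rep_eq M hM X hu hv hr with h1 | h1
        · exact huv.ne h1
        · have hne : s17mate M hM X u ≠ u := by rw [← h1]; exact huv.ne'
          have hMadj := s17mate_adj M hM X hne
          rw [← h1] at hMadj
          exact ((SimpleGraph.compl_adj G' _ _).1 (M.adj_sub hMadj)).2 (hGG' huv)
      · intro hfe
        exact hr (congrArg Subtype.val (hfinj hfe))
end
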